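/- Fix S ∈ (-1,1) and V ∈ ℝ. Among pairs (A₊, A₋) of positive reals satisfying V = A₋(1-S)/2 - A₊(1+S)/2, the Lagrangian L(S,A±) = β⁻¹A₊(log A₊ - 1)(1+S)/2 + β⁻¹A₋(log A₋ - 1)(1-S)/2 is minimized at the unique pair given by (1±S)A± = √(V² + (1-S)(1+S)) ∓ V, and these satisfy A₊A₋ = 1. -/
import Mathlib


open Real Set

/-- The running cost Lagrangian of the Ising game. -/
noncomputable def Lag (β S Ap Am : ℝ) : ℝ :=
  β⁻¹ * Ap * (Real.log Ap - 1) * ((1+S)/2) + β⁻¹ * Am * (Real.log Am - 1) * ((1-S)/2)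

lemma key_strict (a x : ℝ) (ha : 0 < a) (hx : 0 < x) (hne : x ≠ a) :
    a*(Real.log a - 1) + Real.log a * (x - a) < x*(Real.log x - 1) := by
  have hne' : a / x ≠ 1 := by
    intro h
    apply hne
    field_simp at h
    exact h.symm
  have h := Real.log_lt_sub_one_of_pos (div_pos ha hx) hne'
  rw [Real.log_div ha.ne' hx.ne'] at h
  have h2 : x * (Real.log a - Real.log x) < x * (a/x - 1) :=
    (mul_lt_mul_iff_right₀ hx).mpr h
  have h3 : x * (a/x - 1) = a - x := by field_simp
  rw [h3] at h2
  nlinarith [h2]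

lemma key_le (a x : ℝ) (ha : 0 < a) (hx : 0 < x) :
    a*(Real.log a - 1) + Real.log a * (x - a) ≤ x*(Real.log x - 1) := by
  rcases eq_or_ne x a with h | h
  · subst h; ring_nf; exact le_refl _
  · exact (key_strict a x ha hx h).le

theorem lagrangian_minimized_at_optimal_controls (β S V : ℝ) (hβ : 0 < β)
    (hS : S ∈ Set.Ioo (-1:ℝ) 1) (Ap Am : ℝ)
    (hAp : (1+S) * Ap = Real.sqrt (V^2 + (1-S)*(1+S)) - V)
    (hAm : (1-S) * Am = Real.sqrt (V^2 + (1-S)*(1+S)) + V) :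
    0 < Ap ∧ 0 < Am ∧
    V = Am * ((1-S)/2) - Ap * ((1+S)/2) ∧
    Ap * Am = 1 ∧
    ∀ ap am : ℝ, 0 < ap → 0 < am → V = am * ((1-S)/2) - ap * ((1+S)/2) →
      Lag β S Ap Am ≤ Lag β S ap am ∧
      (Lag β S ap am = Lag β S Ap Am → ap = Ap ∧ am = Am) := by
  obtain ⟨hS1, hS2⟩ := hS
  have hSp : 0 < 1 + S := by linarith
  have hSm : 0 < 1 - S := by linarith
  set W := Real.sqrt (V^2 + (1-S)*(1+S)) with hWdef
  have hc : 0 < (1-S)*(1+S) := mul_pos hSm hSp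
  have hW2 : W^2 = V^2 + (1-S)*(1+S) := Real.sq_sqrt (by nlinarith [sq_nonneg V])
  have habs : |V| < W := by
    rw [← Real.sqrt_sq_eq_abs]
    exact Real.sqrt_lt_sqrt (sq_nonneg V) (by linarith)
  obtain ⟨hV1, hV2⟩ := abs_lt.mp habs
  have hApPos : 0 < Ap := by nlinarith [hAp]
  have hAmPos : 0 < Am := by nlinarith [hAm]
  have hcons : V = Am * ((1-S)/2) - Ap * ((1+S)/2) := by
    linear_combination hAp/2 - hAm/2
  have hprod : Ap * Am = 1 := by
    have h : (1+S)*(1-S)*(Ap*Am) = (1+S)*(1-S)*1 := by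
      linear_combination ((1-S)*Am)*hAp + (W-V)*hAm + hW2
    exact mul_left_cancel₀ (mul_pos hSp hSm).ne' h
  have hlog : Real.log Ap = - Real.log Am := by
    have h := Real.log_mul hApPos.ne' hAmPos.ne'
    rw [hprod, Real.log_one] at h
    linarith
  refine ⟨hApPos, hAmPos, hcons, hprod, ?_⟩
  intro ap am hap ham hc2
  have hβi : 0 < β⁻¹ := inv_pos.mpr hβ
  have hz : Real.log Ap * (ap - Ap) * ((1+S)/2) + Real.log Am * (am - Am) * ((1-S)/2) = 0 := by
    rw [hlog]
    linear_combination Real.log Am * hcons - Real.log Am * hc2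
  have E2 := key_le Am am hAmPos ham
  have F2 : (Am*(Real.log Am - 1) + Real.log Am * (am - Am)) * ((1-S)/2)
      ≤ am*(Real.log am - 1) * ((1-S)/2) :=
    mul_le_mul_of_nonneg_right E2 (by linarith)
  have hple : (0:ℝ) ≤ (1+S)/2 := by linarith
  constructor
  · have E1 := key_le Ap ap hApPos hap
    have F1 : (Ap*(Real.log Ap - 1) + Real.log Ap * (ap - Ap)) * ((1+S)/2)
        ≤ ap*(Real.log ap - 1) * ((1+S)/2) :=
      mul_le_mul_of_nonneg_right E1 hple
    have main : Ap*(Real.log Ap - 1)*((1+S)/2) + Am*(Real.log Am - 1)*((1-S)/2)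
        ≤ ap*(Real.log ap - 1)*((1+S)/2) + am*(Real.log am - 1)*((1-S)/2) := by
      linarith [F1, F2, hz]
    have h := mul_le_mul_of_nonneg_left main hβi.le
    unfold Lag
    linarith [h]
  · intro heq
    have hapAp : ap = Ap := by
      by_contra hne
      have hstrict := key_strict Ap ap hApPos hap hne
      have F1 : (Ap*(Real.log Ap - 1) + Real.log Ap * (ap - Ap)) * ((1+S)/2)
          < ap*(Real.log ap - 1) * ((1+S)/2) :=
        mul_lt_mul_of_pos_right hstrict (by linarith)
      have main : Ap*(Real.log Ap - 1)*((1+S)/2) + Am*(Real.log Am - 1)*((1-S)/2)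
          < ap*(Real.log ap - 1)*((1+S)/2) + am*(Real.log am - 1)*((1-S)/2) := by
        linarith [F1, F2, hz]
      have h := mul_lt_mul_of_pos_left main hβi
      have : Lag β S Ap Am < Lag β S ap am := by
        unfold Lag
        linarith [h]
      linarith [heq.le, this]
    refine ⟨hapAp, ?_⟩
    have h : am * ((1-S)/2) = Am * ((1-S)/2) := by
      rw [hapAp] at hc2
      linarith
    exact mul_right_cancel₀ (by positivity : ((1-S)/2 : ℝ) ≠ 0) h
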